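/- Let T be a meet-tree and γ a point. γ-cone-independence satisfies right transitivity: if A ⫝^γ_D B and A ⫝^γ_C D with C ⊆ D ⊆ B, then A ⫝^γ_C B. -/
import Mathlib


/-- The meet-subsemilattice generated by a set `X`. -/
inductive MeetGen {T : Type*} [SemilatticeInf T] (X : Set T) : T → Prop
  | base {x : T} : x ∈ X → MeetGen X x
  | inf {a b : T} : MeetGen X a → MeetGen X b → MeetGen X (a ⊓ b)

/-- `⟨X⟩_γ`: the meet-subsemilattice generated by `X ∪ {γ}`. -/
def clγ {T : Type*} [SemilatticeInf T] (γ : T) (X : Set T) : Set T :=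
  {t : T | MeetGen (X ∪ {γ}) t}

/-- The union of the open cones above `γ` of the elements of `X` that are
strictly above `γ`. -/
def coneSet {T : Type*} [SemilatticeInf T] (γ : T) (X : Set T) : Set T :=
  {y : T | γ < y ∧ ∃ x ∈ X, γ < x ∧ γ < y ⊓ x}

/-- `A` is `γ`-cone-independent of `B` over `C`. -/
def ConeIndep {T : Type*} [SemilatticeInf T] (γ : T) (A C B : Set T) : Prop :=
  (∀ a ∈ clγ γ (A ∪ C), ∀ b ∈ clγ γ (B ∪ C), b ≤ a →
      ∃ c ∈ clγ γ C, b ≤ c ∧ c ≤ a) ∧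
  (∀ a ∈ clγ γ (A ∪ C), ∀ b ∈ clγ γ (B ∪ C), a ⊓ b ∉ clγ γ C →
      ∃ c ∈ clγ γ C, a ⊓ c ≠ b ⊓ c)
lemma clγ_mono {T : Type*} [SemilatticeInf T] (γ : T) {X Y : Set T} (h : X ⊆ Y) :
    clγ γ X ⊆ clγ γ Y := by
  intro t ht
  induction ht with
  | base hx => exact MeetGen.base (Set.union_subset_union_left _ h hx)
  | inf _ _ ih1 ih2 => exact MeetGen.inf ih1 ih2

lemma comp_le {T : Type*} [SemilatticeInf T]
    (hsl : ∀ a : T, IsChain (· ≤ ·) {x : T | x < a})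
    {d x y : T} (hx : x ≤ d) (hy : y ≤ d) : x ≤ y ∨ y ≤ x := by
  rcases eq_or_lt_of_le hx with rfl | hx'
  · exact Or.inr hy
  rcases eq_or_lt_of_le hy with rfl | hy'
  · exact Or.inl hx
  rcases eq_or_ne x y with rfl | hne
  · exact Or.inl le_rfl
  exact hsl d hx' hy' hne

lemma three_points {T : Type*} [SemilatticeInf T]
    (hsl : ∀ a : T, IsChain (· ≤ ·) {x : T | x < a})
    {a b c : T} (h : a ⊓ b ≠ a ⊓ b ⊓ c) : a ⊓ c = b ⊓ c := by
  have h1 : a ⊓ c ≤ a ⊓ b := by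
    rcases comp_le hsl (inf_le_left : a ⊓ c ≤ a) (inf_le_left : a ⊓ b ≤ a) with h' | h'
    · exact h'
    · exact absurd (le_antisymm inf_le_left (le_inf le_rfl (h'.trans inf_le_right))).symm h
  have h2 : b ⊓ c ≤ a ⊓ b := by
    rcases comp_le hsl (inf_le_left : b ⊓ c ≤ b) (inf_le_right : a ⊓ b ≤ b) with h' | h'
    · exact h'
    · exact absurd (le_antisymm inf_le_left (le_inf le_rfl (h'.trans inf_le_right))).symm h
  exact le_antisymm (le_inf (h1.trans inf_le_right) inf_le_right)
    (le_inf (h2.trans inf_le_left) inf_le_right)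

lemma four_points {T : Type*} [SemilatticeInf T]
    (hsl : ∀ a : T, IsChain (· ≤ ·) {x : T | x < a})
    {a b c d : T} (hc : a ⊓ c = b ⊓ c) (hd : a ⊓ d ≠ b ⊓ d) : a ⊓ c = d ⊓ c := by
  have habd : a ⊓ b = a ⊓ b ⊓ d := by
    by_contra hne
    exact hd (three_points hsl hne)
  have heb : a ⊓ c ≤ b := hc.le.trans inf_le_left
  have hed : a ⊓ c ≤ d := (le_inf inf_le_left heb).trans (habd.le.trans inf_le_right)
  have hecd : a ⊓ c ≤ d ⊓ c := le_inf hed inf_le_right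
  rcases comp_le hsl (inf_le_left : d ⊓ c ≤ d)
      (inf_le_right : a ⊓ d ≤ d) with h1 | h1
  · -- d ⊓ c ≤ a ⊓ d, so d ⊓ c ≤ a ⊓ c
    exact le_antisymm hecd (le_inf (h1.trans inf_le_left) inf_le_right)
  · rcases comp_le hsl (inf_le_left : d ⊓ c ≤ d)
        (inf_le_right : b ⊓ d ≤ d) with h2 | h2
    · -- d ⊓ c ≤ b ⊓ d, so d ⊓ c ≤ b ⊓ c = a ⊓ c
      have : d ⊓ c ≤ b ⊓ c := le_inf (h2.trans inf_le_left) inf_le_right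
      exact le_antisymm hecd (hc ▸ this)
    · -- b ⊓ d ≤ d ⊓ c and a ⊓ d ≤ d ⊓ c : contradiction with hd
      exfalso
      apply hd
      have hadc : a ⊓ d ≤ c := h1.trans inf_le_right
      have hbdc : b ⊓ d ≤ c := h2.trans inf_le_right
      have h3 : a ⊓ d ≤ b ⊓ d :=
        le_inf ((le_inf inf_le_left hadc).trans (hc.le.trans inf_le_left)) inf_le_right
      have h4 : b ⊓ d ≤ a ⊓ d :=
        le_inf ((le_inf inf_le_left hbdc).trans (hc.ge.trans inf_le_left)) inf_le_right
      exact le_antisymm h3 h4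

/-- Right transitivity: if `A ⫝^γ_D B` and `A ⫝^γ_C D` with `C ⊆ D ⊆ B`, then
`A ⫝^γ_C B`. -/
theorem coneIndep_trans {T : Type*} [SemilatticeInf T]
    (hsl : ∀ a : T, IsChain (· ≤ ·) {x : T | x < a})
    (γ : T) (A B C D : Set T) (h1 : ConeIndep γ A D B) (h2 : ConeIndep γ A C D)
    (hCD : C ⊆ D) (hDB : D ⊆ B) :
    ConeIndep γ A C B := by
  have hBC : B ∪ C = B := Set.union_eq_self_of_subset_right (hCD.trans hDB)
  have hBD : B ∪ D = B := Set.union_eq_self_of_subset_right hDB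
  have hDCeq : D ∪ C = D := Set.union_eq_self_of_subset_right hCD
  have hAD : clγ γ (A ∪ C) ⊆ clγ γ (A ∪ D) :=
    clγ_mono γ (Set.union_subset_union_right A hCD)
  constructor
  · intro a ha b hb hba
    obtain ⟨d, hdD, hbd, hda⟩ := h1.1 a (hAD ha) b (by rwa [hBD, ← hBC]) hba
    obtain ⟨c, hcC, hdc, hca⟩ := h2.1 a ha d (by rwa [hDCeq]) hda
    exact ⟨c, hcC, hbd.trans hdc, hca⟩
  · intro a ha b hb hab
    by_cases habD : a ⊓ b ∈ clγ γ D
    · obtain ⟨c, hcC, hne⟩ := h2.2 a ha (a ⊓ b) (by rwa [hDCeq])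
        (by rwa [← inf_assoc, inf_idem])
      refine ⟨c, hcC, fun h => hne ?_⟩
      rw [inf_assoc, ← h, ← inf_assoc, inf_idem]
    · obtain ⟨d, hdD, hadbd⟩ := h1.2 a (hAD ha) b (by rwa [hBD, ← hBC]) habD
      by_cases hadC : a ⊓ d ∈ clγ γ C
      · by_cases h3 : a ⊓ d = a ⊓ b ⊓ d
        · exfalso
          apply hab
          have habd : a ⊓ b = a ⊓ b ⊓ d := by
            by_contra hne
            exact hadbd (three_points hsl hne)
          rw [habd, ← h3]
          exact hadC
        · refine ⟨a ⊓ d, hadC, fun h => h3 ?_⟩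
          have h1' : a ⊓ (a ⊓ d) = a ⊓ d := by rw [← inf_assoc, inf_idem]
          have h2' : b ⊓ (a ⊓ d) = a ⊓ b ⊓ d := by
            rw [← inf_assoc, inf_comm b a]
          rw [← h1', h, h2']
      · obtain ⟨c, hcC, hacdc⟩ := h2.2 a ha d (by rwa [hDCeq]) hadC
        exact ⟨c, hcC, fun h => hacdc (four_points hsl h hadbd)⟩
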